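/- For every continuous ℤ^d-periodic function u : ℝ^d → ℝ, the map (t,x) ↦ T̃^a_t u(x) is continuous on [0,∞) × ℝ^d. -/

import Mathlib

open Set Filter

noncomputable section

/-- Euclidean space `ℝ^d`. -/
abbrev Ed (d : ℕ) := EuclideanSpace ℝ (Fin d)

/-- The vector in `ℝ^d` with integer coordinates `k`. -/
def intVec (d : ℕ) (k : Fin d → ℤ) : Ed d := WithLp.toLp 2 (fun i => (k i : ℝ))

/-- `u : ℝ^d → ℝ` is `ℤ^d`-periodic. -/
def IsZdPeriodic {d : ℕ} (u : Ed d → ℝ) : Prop :=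
  ∀ (x : Ed d) (k : Fin d → ℤ), u (x + intVec d k) = u x

/-- `γ` is continuous and piecewise `C¹` on `[a, b]`. -/
def PiecewiseC1On {d : ℕ} (γ : ℝ → Ed d) (a b : ℝ) : Prop :=
  ContinuousOn γ (Set.Icc a b) ∧
  ∃ (n : ℕ) (T : Fin (n + 1) → ℝ), T 0 = a ∧ T (Fin.last n) = b ∧ Monotone T ∧
    ∀ i : Fin n, ContDiffOn ℝ 1 γ (Set.Icc (T i.castSucc) (T i.succ))

/-- The standing hypotheses on the autonomous Tonelli Lagrangian `La`:
`C²` smoothness, `ℤ^d`-periodicity in `x`, positive definiteness of the Hessian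
`∂²La/∂v²`, and superlinear growth in `v`. -/
def TonelliAut {d : ℕ} (La : Ed d → Ed d → ℝ) : Prop :=
  ContDiff ℝ 2 (fun p : Ed d × Ed d => La p.1 p.2) ∧
  (∀ (x v : Ed d) (k : Fin d → ℤ), La (x + intVec d k) v = La x v) ∧
  (∀ x v w : Ed d, w ≠ 0 → 0 < iteratedFDeriv ℝ 2 (fun v' => La x v') v ![w, w]) ∧
  (∀ A : ℝ, 0 ≤ A → ∃ B : ℝ, ∀ x v : Ed d, A * ‖v‖ - B ≤ La x v)

/-- The action of the curve `γ : [a,b] → ℝ^d` for the autonomous Lagrangian `La`. -/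
def actionA {d : ℕ} (La : Ed d → Ed d → ℝ) (γ : ℝ → Ed d) (a b : ℝ) : ℝ :=
  ∫ s in a..b, La (γ s) (deriv γ s)

/-- The Lax–Oleinik semigroup `Tᵃ_t u (x)`: `Tᵃ_0 u = u` and, for `t > 0`, the infimum of
`u(γ(0)) + ∫₀^t La(γ,γ') ds` over continuous piecewise `C¹` curves ending at `x`. -/
def LOa {d : ℕ} (La : Ed d → Ed d → ℝ) (u : Ed d → ℝ) (t : ℝ) (x : Ed d) : ℝ :=
  if t = 0 then u x
  else sInf {r | ∃ γ : ℝ → Ed d, PiecewiseC1On γ 0 t ∧ γ t = x ∧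
    r = u (γ 0) + actionA La γ 0 t}

/-- The new Lax–Oleinik operator `T̃ᵃ_t u (x) = inf_{σ ∈ [t,2t]} Tᵃ_σ u (x)`. -/
def LOnew {d : ℕ} (La : Ed d → Ed d → ℝ) (u : Ed d → ℝ) (t : ℝ) (x : Ed d) : ℝ :=
  sInf {r | ∃ σ : ℝ, t ≤ σ ∧ σ ≤ 2 * t ∧ r = LOa La u σ x}

/-!
Periodicity makes `u` bounded and `La` bounded on every set `{‖v‖ ≤ R}`. For `σ, τ > 0`,
appending a segment to a curve gives `Tᵃ_{σ+τ} u y ≤ Tᵃ_σ u x + C τ` when `‖y - x‖ ≤ τ`.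
Conversely, a near-minimiser for `Tᵃ_σ u x` has length bounded by superlinearity, so on one of
`N` equal subintervals it moves at most `L / N`; replacing that piece by a segment traversed in
a time shorter by `δ` shows `Tᵃ_{σ-δ} u x ≤ Tᵃ_σ u x + O(1/N)`, uniformly for `σ` in a compact
subset of `(0, ∞)`. Together these make `(σ, x) ↦ Tᵃ_σ u x` continuous for `σ > 0`, and an
infimum over `σ ∈ [t, 2t] = t • [1, 2]` stays continuous. At `t = 0`, the constant curve gives
`T̃ᵃ_t u x ≤ u x + t La x 0`, while superlinearity makes curves that start far from `x₀`
expensive, so `Tᵃ_σ u x ≥ u x₀ - ε - D σ` for `x` near `x₀`.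
-/

open MeasureTheory Topology

theorem exists_integral_le_div {f : ℝ → ℝ} {a b : ℝ} (hab : a ≤ b)
    (hf : IntervalIntegrable f volume a b) {N : ℕ} (hN : 0 < N) :
    ∃ j < N, ∫ s in (a + j * ((b - a) / N))..(a + (j + 1) * ((b - a) / N)), f s ≤
      (∫ s in a..b, f s) / N := by
  set p : ℕ → ℝ := fun k => a + k * ((b - a) / N)
  have hN' : (0 : ℝ) < N := Nat.cast_pos.2 hN
  have hp : Monotone p := fun i j hij => by
    simp only [p]
    gcongr
  have hp0 : p 0 = a := by simp [p]
  have hpN : p N = b := by simp only [p]; field_simp; ring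
  have hmem : ∀ k ≤ N, p k ∈ uIcc a b := fun k hk =>
    Icc_subset_uIcc ⟨hp0 ▸ hp (Nat.zero_le k), hpN ▸ hp hk⟩
  have hsum := intervalIntegral.sum_integral_adjacent_intervals (f := f) (μ := volume)
    fun k hk => hf.mono_set (uIcc_subset_uIcc (hmem k hk.le) (hmem (k + 1) hk))
  rw [hp0, hpN] at hsum
  obtain ⟨j, hj, hle⟩ := Finset.exists_le_of_sum_le (Finset.nonempty_range_iff.2 hN.ne')
    (hsum.trans_le (by
      rw [Finset.sum_const, Finset.card_range, nsmul_eq_mul, mul_div_cancel₀ _ hN'.ne']))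
  refine ⟨j, Finset.mem_range.1 hj, ?_⟩
  rwa [show p (j + 1) = a + (j + 1) * ((b - a) / N) by simp [p]] at hle

/-- Substituting `σ = θ * t` turns the moving interval `[t, 2 * t]` into the fixed compact
`[1, 2]`. -/
theorem ContinuousOn.sInf_image_Icc_two_mul {X : Type*} [TopologicalSpace X] {F : ℝ → X → ℝ}
    (hF : ContinuousOn (fun p : ℝ × X => F p.1 p.2) (Ioi 0 ×ˢ univ)) :
    ContinuousOn (fun p : ℝ × X => sInf ((fun σ => F σ p.2) '' Icc p.1 (2 * p.1)))
      (Ioi 0 ×ˢ univ) := by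
  rintro ⟨t₀, x₀⟩ ⟨ht₀ : 0 < t₀, -⟩
  set g : ℝ × X → ℝ := fun p => F (max p.1 (t₀ / 2)) p.2
  have hg : Continuous g := hF.comp_continuous
    ((continuous_fst.max continuous_const).prodMk continuous_snd)
    fun p => ⟨lt_max_of_lt_right (half_pos ht₀), trivial⟩
  have hcont : Continuous fun p : ℝ × X => sInf ((fun θ => g (θ * p.1, p.2)) '' Icc 1 2) :=
    isCompact_Icc.continuous_sInf (by fun_prop)
  refine (hcont.continuousAt.congr_of_eventuallyEq ?_).continuousWithinAt
  filter_upwards [(continuous_fst.tendsto (t₀, x₀)).eventually (lt_mem_nhds (half_lt_self ht₀))]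
    with ⟨t, x⟩ ht
  have ht' : 0 < t := (half_pos ht₀).trans ht
  congr 1
  ext r
  constructor
  · rintro ⟨σ, ⟨h₁, h₂⟩, rfl⟩
    refine ⟨σ / t, ⟨(one_le_div ht').2 h₁, (div_le_iff₀ ht').2 h₂⟩, ?_⟩
    simp only [g, div_mul_cancel₀ σ ht'.ne', max_eq_left (ht.le.trans h₁)]
  · rintro ⟨θ, ⟨h₁, h₂⟩, rfl⟩
    refine ⟨θ * t, ⟨le_mul_of_one_le_left ht'.le h₁, by nlinarith⟩, ?_⟩
    simp only [g, max_eq_left (ht.le.trans (le_mul_of_one_le_left ht'.le h₁))]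

section

variable {d : ℕ}

def unitCube (d : ℕ) : Set (Ed d) := WithLp.toLp 2 '' univ.pi fun _ => Icc 0 1

theorem isCompact_unitCube : IsCompact (unitCube d) :=
  (isCompact_univ_pi fun _ => isCompact_Icc).image (PiLp.continuous_toLp 2 _)

theorem exists_sub_intVec_mem_unitCube (x : Ed d) : ∃ k, x - intVec d k ∈ unitCube d :=
  ⟨fun i => ⌊x i⌋, _, fun i _ => ⟨Int.fract_nonneg (x i), (Int.fract_lt_one (x i)).le⟩, rfl⟩

theorem IsZdPeriodic.range_eq_image_unitCube {u : Ed d → ℝ} (hper : IsZdPeriodic u) :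
    range u = u '' unitCube d := by
  refine (image_subset_range _ _).antisymm' ?_
  rintro _ ⟨x, rfl⟩
  obtain ⟨k, hk⟩ := exists_sub_intVec_mem_unitCube x
  exact ⟨_, hk, by simpa using (hper (x - intVec d k) k).symm⟩

theorem IsZdPeriodic.isCompact_range {u : Ed d → ℝ} (hper : IsZdPeriodic u) (hu : Continuous u) :
    IsCompact (range u) :=
  hper.range_eq_image_unitCube ▸ isCompact_unitCube.image hu

namespace TonelliAut

variable {La : Ed d → Ed d → ℝ}

theorem continuous (hLa : TonelliAut La) : Continuous (Function.uncurry La) :=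
  hLa.1.continuous

theorem exists_mul_norm_sub_le (hLa : TonelliAut La) {A : ℝ} (hA : 0 ≤ A) :
    ∃ B, 0 ≤ B ∧ ∀ x v, A * ‖v‖ - B ≤ La x v := by
  obtain ⟨B, hB⟩ := hLa.2.2.2 A hA
  exact ⟨max B 0, le_max_right _ _, fun x v => (hB x v).trans' (by gcongr; exact le_max_left _ _)⟩

theorem exists_neg_le (hLa : TonelliAut La) : ∃ B, 0 ≤ B ∧ ∀ x v, -B ≤ La x v := by
  obtain ⟨B, hB, hB'⟩ := hLa.exists_mul_norm_sub_le le_rfl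
  exact ⟨B, hB, fun x v => by simpa using hB' x v⟩

theorem exists_le_of_norm_le (hLa : TonelliAut La) (R : ℝ) :
    ∃ C, 0 ≤ C ∧ ∀ x v, ‖v‖ ≤ R → La x v ≤ C := by
  obtain ⟨C, hC⟩ := ((isCompact_unitCube.prod (isCompact_closedBall (0 : Ed d) R)).image
    hLa.continuous).isBounded.bddAbove
  refine ⟨max C 0, le_max_right _ _, fun x v hv => le_max_of_le_left (hC ?_)⟩
  obtain ⟨k, hk⟩ := exists_sub_intVec_mem_unitCube x
  exact ⟨(x - intVec d k, v), ⟨hk, by simpa using hv⟩,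
    by simpa using (hLa.2.1 (x - intVec d k) v k).symm⟩

end TonelliAut

theorem PiecewiseC1On.le {γ : ℝ → Ed d} {a b : ℝ} (h : PiecewiseC1On γ a b) : a ≤ b := by
  obtain ⟨-, n, T, h0, hn, hT, -⟩ := h
  exact h0 ▸ hn ▸ hT (Fin.zero_le _)

theorem PiecewiseC1On.exists_breakpoints {γ : ℝ → Ed d} {a b : ℝ} (h : PiecewiseC1On γ a b) :
    ∃ S : Finset ℝ, ∀ p q, a ≤ p → p < q → q ≤ b → (∀ s ∈ S, s ∉ Ioo p q) →
      ContDiffOn ℝ 1 γ (Icc p q) := by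
  classical
  obtain ⟨-, n, T, h0, hn, -, hC⟩ := h
  refine ⟨Finset.univ.image T, fun p q hp hpq hq hS => ?_⟩
  obtain ⟨j, hj, hjmax⟩ := (Finset.univ.filter fun j => T j ≤ p).exists_max_image id
    ⟨0, by simpa [h0] using hp⟩
  have hjp : T j ≤ p := (Finset.mem_filter.1 hj).2
  obtain ⟨i, rfl⟩ : ∃ i, Fin.castSucc i = j :=
    Fin.exists_castSucc_eq.2 fun hjn => (hpq.trans_le hq).not_ge (hn ▸ hjn ▸ hjp)
  have hpi : p < T i.succ := lt_of_not_ge fun h =>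
    (Fin.castSucc_lt_succ (i := i)).not_ge (hjmax _ (Finset.mem_filter.2 ⟨Finset.mem_univ _, h⟩))
  have hqi : q ≤ T i.succ := le_of_not_gt fun h =>
    hS _ (Finset.mem_image_of_mem T (Finset.mem_univ _)) ⟨hpi, h⟩
  exact (hC i).mono (Icc_subset_Icc hjp hqi)

theorem piecewiseC1On_of_breakpoints {γ : ℝ → Ed d} {a b : ℝ} (hab : a ≤ b)
    (hc : ContinuousOn γ (Icc a b)) (S : Finset ℝ)
    (hS : ∀ p q, a ≤ p → p < q → q ≤ b → (∀ s ∈ S, s ∉ Ioo p q) → ContDiffOn ℝ 1 γ (Icc p q)) :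
    PiecewiseC1On γ a b := by
  set F := insert a (insert b (S.filter (· ∈ Ioo a b)))
  have hF : ∀ s ∈ F, s ∈ Icc a b := by
    simp only [F, Finset.mem_insert, Finset.mem_filter]
    rintro s (rfl | rfl | ⟨-, hs⟩)
    exacts [⟨le_rfl, hab⟩, ⟨hab, le_rfl⟩, Ioo_subset_Icc_self hs]
  obtain ⟨n, hn⟩ : ∃ n, F.card = n + 1 :=
    Nat.exists_eq_succ_of_ne_zero (Finset.card_ne_zero_of_mem (Finset.mem_insert_self a _))
  set T := F.orderEmbOfFin hn
  have hTF : ∀ i, T i ∈ Icc a b := fun i => hF _ (F.orderEmbOfFin_mem hn i)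
  have hFT : ∀ s ∈ F, ∃ i, T i = s := fun s hs => by
    rwa [← Finset.mem_coe, ← F.range_orderEmbOfFin hn] at hs
  obtain ⟨i₀, hi₀⟩ := hFT a (Finset.mem_insert_self _ _)
  obtain ⟨i₁, hi₁⟩ := hFT b (by simp [F])
  refine ⟨hc, n, T, (hTF 0).1.antisymm' (hi₀ ▸ T.monotone (Fin.zero_le _)),
    (hTF _).2.antisymm (hi₁ ▸ T.monotone (Fin.le_last _)), T.monotone, fun i => ?_⟩
  refine hS _ _ (hTF _).1 (T.strictMono (Fin.castSucc_lt_succ (i := i))) (hTF _).2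
    fun s hs hsi => ?_
  obtain ⟨j, rfl⟩ := hFT s (by simp [F, hs, (hTF _).1.trans_lt hsi.1, hsi.2.trans_le (hTF _).2])
  have h1 := T.lt_iff_lt.1 hsi.1
  have h2 := T.lt_iff_lt.1 hsi.2
  rw [Fin.lt_def] at h1 h2
  simp only [Fin.val_castSucc, Fin.val_succ] at h1 h2
  omega

/-- Breakpoints, unlike an ordered partition, survive restriction, translation and
concatenation unchanged. -/
theorem piecewiseC1On_iff {γ : ℝ → Ed d} {a b : ℝ} :
    PiecewiseC1On γ a b ↔ a ≤ b ∧ ContinuousOn γ (Icc a b) ∧ ∃ S : Finset ℝ,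
      ∀ p q, a ≤ p → p < q → q ≤ b → (∀ s ∈ S, s ∉ Ioo p q) → ContDiffOn ℝ 1 γ (Icc p q) :=
  ⟨fun h => ⟨h.le, h.1, h.exists_breakpoints⟩,
    fun ⟨hab, hc, S, hS⟩ => piecewiseC1On_of_breakpoints hab hc S hS⟩

def joinAt (γ₁ γ₂ : ℝ → Ed d) (b : ℝ) : ℝ → Ed d := fun s => if s ≤ b then γ₁ s else γ₂ s

section Curves

variable {γ γ₁ γ₂ : ℝ → Ed d} {a b c : ℝ}

theorem eqOn_joinAt_left : EqOn (joinAt γ₁ γ₂ b) γ₁ (Iic b) := fun _ hs => if_pos hs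

theorem eqOn_joinAt_right (h : γ₁ b = γ₂ b) : EqOn (joinAt γ₁ γ₂ b) γ₂ (Ici b) := fun s hs => by
  rcases (mem_Ici.1 hs).eq_or_lt with rfl | hlt
  · exact (if_pos le_rfl).trans h
  · exact if_neg hlt.not_ge

theorem ContDiffOn.piecewiseC1On (h : ContDiffOn ℝ 1 γ (Icc a b)) (hab : a ≤ b) :
    PiecewiseC1On γ a b :=
  piecewiseC1On_iff.2 ⟨hab, h.continuousOn, ∅, fun _ _ hp _ hq _ => h.mono (Icc_subset_Icc hp hq)⟩

namespace PiecewiseC1On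

theorem mono (h : PiecewiseC1On γ a b) {a' b' : ℝ} (ha : a ≤ a') (hab : a' ≤ b') (hb : b' ≤ b) :
    PiecewiseC1On γ a' b' := by
  obtain ⟨-, hc, S, hS⟩ := piecewiseC1On_iff.1 h
  exact piecewiseC1On_iff.2 ⟨hab, hc.mono (Icc_subset_Icc ha hb), S,
    fun p q hp hpq hq => hS p q (ha.trans hp) hpq (hq.trans hb)⟩

theorem comp_add_const (h : PiecewiseC1On γ a b) (c : ℝ) :
    PiecewiseC1On (fun s => γ (s + c)) (a - c) (b - c) := by
  obtain ⟨hab, hc, S, hS⟩ := piecewiseC1On_iff.1 h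
  have hmaps : ∀ p q, MapsTo (· + c) (Icc (p - c) (q - c)) (Icc p q) := fun p q s hs =>
    ⟨by linarith [hs.1], by linarith [hs.2]⟩
  refine piecewiseC1On_iff.2 ⟨by linarith,
    hc.comp (continuous_add_const c).continuousOn (hmaps a b), S.image (· - c),
    fun p q hp hpq hq hpS => ?_⟩
  have hC := hS (p + c) (q + c) (by linarith) (by linarith) (by linarith) fun s hs hsI =>
    hpS (s - c) (Finset.mem_image_of_mem _ hs) ⟨by linarith [hsI.1], by linarith [hsI.2]⟩
  exact hC.comp (contDiff_id.add contDiff_const).contDiffOn (by simpa using hmaps (p + c) (q + c))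

theorem joinAt (h₁ : PiecewiseC1On γ₁ a b) (h₂ : PiecewiseC1On γ₂ b c) (h : γ₁ b = γ₂ b) :
    PiecewiseC1On (joinAt γ₁ γ₂ b) a c := by
  obtain ⟨hab, hc₁, S₁, hS₁⟩ := piecewiseC1On_iff.1 h₁
  obtain ⟨hbc, hc₂, S₂, hS₂⟩ := piecewiseC1On_iff.1 h₂
  have hl : EqOn (_root_.joinAt γ₁ γ₂ b) γ₁ (Iic b) := eqOn_joinAt_left
  have hr := eqOn_joinAt_right h
  refine piecewiseC1On_iff.2 ⟨hab.trans hbc, ?_, insert b (S₁ ∪ S₂), fun p q hp hpq hq hS => ?_⟩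
  · rw [← Icc_union_Icc_eq_Icc hab hbc]
    exact (hc₁.congr fun s hs => hl hs.2).union_of_isClosed (hc₂.congr fun s hs => hr hs.1)
      isClosed_Icc isClosed_Icc
  simp only [Finset.mem_insert, Finset.mem_union] at hS
  rcases le_or_gt q b with hqb | hbq
  · exact (hS₁ p q hp hpq hqb fun s hs => hS s (.inr (.inl hs))).congr
      fun s hs => hl (hs.2.trans hqb)
  · have hbp : b ≤ p := le_of_not_gt fun hpb => hS b (.inl rfl) ⟨hpb, hbq⟩
    exact (hS₂ p q hbp hpq hq fun s hs => hS s (.inr (.inr hs))).congr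
      fun s hs => hr (hbp.trans hs.1)

theorem induction_on {P : ℝ → ℝ → Prop} (h : PiecewiseC1On γ a b)
    (piece : ∀ p q, a ≤ p → p ≤ q → q ≤ b → ContDiffOn ℝ 1 γ (Icc p q) → P p q)
    (trans : ∀ p r q, a ≤ p → p ≤ r → r ≤ q → q ≤ b → P p r → P r q → P p q) : P a b := by
  obtain ⟨hab, -, S, hS⟩ := piecewiseC1On_iff.1 h
  have key : ∀ S : Finset ℝ, ∀ p q, a ≤ p → p ≤ q → q ≤ b →
      (∀ p' q', p ≤ p' → p' < q' → q' ≤ q → (∀ s ∈ S, s ∉ Ioo p' q') →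
        ContDiffOn ℝ 1 γ (Icc p' q')) → P p q := by
    intro S
    induction S using Finset.induction_on with
    | empty =>
      intro p q hp hpq hq hC
      rcases hpq.eq_or_lt with rfl | hlt
      · refine piece p p hp le_rfl hq ?_
        rw [Icc_self]
        exact fun s hs => (mem_singleton_iff.1 hs) ▸ contDiffWithinAt_singleton
      · exact piece p q hp hpq hq (hC p q le_rfl hlt le_rfl (by simp))
    | insert s S _ ih =>
      intro p q hp hpq hq hC
      simp only [Finset.forall_mem_insert] at hC
      by_cases hs : s ∈ Ioo p q
      · exact trans p s q hp hs.1.le hs.2.le hq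
          (ih p s hp hs.1.le (hs.2.le.trans hq) fun p' q' h₁ h₂ h₃ h₄ =>
            hC p' q' h₁ h₂ (h₃.trans hs.2.le) ⟨fun hI => h₃.not_gt hI.2, h₄⟩)
          (ih s q (hp.trans hs.1.le) hs.2.le hq fun p' q' h₁ h₂ h₃ h₄ =>
            hC p' q' (hs.1.le.trans h₁) h₂ h₃ ⟨fun hI => h₁.not_gt hI.1, h₄⟩)
      · exact ih p q hp hpq hq fun p' q' h₁ h₂ h₃ h₄ =>
          hC p' q' h₁ h₂ h₃ ⟨fun hI => hs ⟨h₁.trans_lt hI.1, hI.2.trans_le h₃⟩, h₄⟩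
  exact key S a b le_rfl hab le_rfl hS

theorem intervalIntegrable_comp {F : Type*} [NormedAddCommGroup F] {φ : Ed d → Ed d → F}
    (hφ : Continuous (Function.uncurry φ)) (h : PiecewiseC1On γ a b) :
    IntervalIntegrable (fun s => φ (γ s) (deriv γ s)) volume a b := by
  refine h.induction_on (fun p q _ hpq _ hC => ?_) fun _ _ _ _ _ _ _ h₁ h₂ => h₁.trans h₂
  rcases hpq.eq_or_lt with rfl | hlt
  · exact .refl
  rw [intervalIntegrable_iff_integrableOn_Ioo_of_le hpq]
  have hcont : ContinuousOn (fun s => φ (γ s) (derivWithin γ (Icc p q) s)) (Icc p q) :=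
    hφ.comp_continuousOn
      (hC.continuousOn.prodMk (hC.continuousOn_derivWithin (uniqueDiffOn_Icc hlt) le_rfl))
  refine (hcont.integrableOn_Icc.mono_set Ioo_subset_Icc_self).congr_fun (fun s hs => ?_)
    measurableSet_Ioo
  simp [derivWithin_of_mem_nhds (Icc_mem_nhds hs.1 hs.2)]

theorem integral_deriv_eq_sub (h : PiecewiseC1On γ a b) : ∫ s in a..b, deriv γ s = γ b - γ a := by
  have hint : ∀ p q, a ≤ p → p ≤ q → q ≤ b → IntervalIntegrable (deriv γ) volume p q :=
    fun p q hp hpq hq => (h.mono hp hpq hq).intervalIntegrable_comp (φ := fun _ v => v)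
      continuous_snd
  refine h.induction_on (P := fun p q => ∫ s in p..q, deriv γ s = γ q - γ p)
    (fun p q hp hpq hq hC => ?_) fun p r q hp hpr hrq hq h₁ h₂ => ?_
  · refine intervalIntegral.integral_eq_sub_of_hasDerivAt_of_le hpq hC.continuousOn
      (fun s hs => ?_) (hint p q hp hpq hq)
    exact ((hC.differentiableOn one_ne_zero s (Ioo_subset_Icc_self hs)).differentiableAt
      (Icc_mem_nhds hs.1 hs.2)).hasDerivAt
  · rw [← intervalIntegral.integral_add_adjacent_intervals (hint p r hp hpr (hrq.trans hq))
      (hint r q (hp.trans hpr) hrq hq), h₁, h₂]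
    abel

theorem norm_sub_le_integral (h : PiecewiseC1On γ a b) :
    ‖γ b - γ a‖ ≤ ∫ s in a..b, ‖deriv γ s‖ :=
  h.integral_deriv_eq_sub ▸ intervalIntegral.norm_integral_le_integral_norm h.le

end PiecewiseC1On

end Curves

def segmentCurve (p q : Ed d) (α β : ℝ) (s : ℝ) : Ed d := p + ((s - α) / (β - α)) • (q - p)

section Action

variable {La : Ed d → Ed d → ℝ} {γ γ₁ γ₂ : ℝ → Ed d} {a b c : ℝ}

theorem PiecewiseC1On.actionA_add (hLa : Continuous (Function.uncurry La))
    (h₁ : PiecewiseC1On γ a b) (h₂ : PiecewiseC1On γ b c) :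
    actionA La γ a b + actionA La γ b c = actionA La γ a c :=
  intervalIntegral.integral_add_adjacent_intervals (h₁.intervalIntegrable_comp hLa)
    (h₂.intervalIntegrable_comp hLa)

theorem actionA_congr (hab : a ≤ b) (h : EqOn γ₁ γ₂ (Icc a b)) :
    actionA La γ₁ a b = actionA La γ₂ a b := by
  simp only [actionA, intervalIntegral.integral_of_le hab, integral_Ioc_eq_integral_Ioo]
  have h' := h.mono Ioo_subset_Icc_self
  exact setIntegral_congr_fun measurableSet_Ioo fun s hs => by
    simp only [h' hs, h'.deriv isOpen_Ioo hs]

theorem actionA_comp_add_const (c : ℝ) :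
    actionA La (fun s => γ (s + c)) (a - c) (b - c) = actionA La γ a b := by
  simp only [actionA, deriv_comp_add_const]
  rw [intervalIntegral.integral_comp_add_right (fun s => La (γ s) (deriv γ s)), sub_add_cancel,
    sub_add_cancel]

theorem actionA_const (x : Ed d) : actionA La (fun _ => x) a b = (b - a) * La x 0 := by
  simp [actionA]

theorem actionA_joinAt (hLa : Continuous (Function.uncurry La)) (h₁ : PiecewiseC1On γ₁ a b)
    (h₂ : PiecewiseC1On γ₂ b c) (h : γ₁ b = γ₂ b) :
    actionA La (joinAt γ₁ γ₂ b) a c = actionA La γ₁ a b + actionA La γ₂ b c := by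
  have hj := h₁.joinAt h₂ h
  rw [← (hj.mono le_rfl h₁.le h₂.le).actionA_add hLa (hj.mono h₁.le h₂.le le_rfl),
    actionA_congr h₁.le (eqOn_joinAt_left.mono fun s hs => hs.2),
    actionA_congr h₂.le ((eqOn_joinAt_right h).mono fun s hs => hs.1)]

theorem PiecewiseC1On.mul_integral_norm_deriv_sub_le_actionA
    (hLa : Continuous (Function.uncurry La)) (h : PiecewiseC1On γ a b) {A B : ℝ}
    (hAB : ∀ x v, A * ‖v‖ - B ≤ La x v) :
    A * (∫ s in a..b, ‖deriv γ s‖) - B * (b - a) ≤ actionA La γ a b := by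
  have hn := h.intervalIntegrable_comp (φ := fun _ v => ‖v‖) continuous_snd.norm
  have := intervalIntegral.integral_mono_on h.le ((hn.const_mul A).sub intervalIntegrable_const)
    (h.intervalIntegrable_comp hLa) fun s _ => hAB (γ s) (deriv γ s)
  rw [intervalIntegral.integral_sub (hn.const_mul A) intervalIntegrable_const,
    intervalIntegral.integral_const_mul, intervalIntegral.integral_const, smul_eq_mul] at this
  rw [mul_comm B]
  exact this

theorem PiecewiseC1On.neg_mul_le_actionA (hLa : Continuous (Function.uncurry La))
    (h : PiecewiseC1On γ a b) {B : ℝ} (hB : ∀ x v, -B ≤ La x v) :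
    -B * (b - a) ≤ actionA La γ a b := by
  simpa using h.mul_integral_norm_deriv_sub_le_actionA hLa (A := 0) (by simpa using hB)

variable {p q : Ed d} {α β : ℝ}

theorem hasDerivAt_segmentCurve (s : ℝ) :
    HasDerivAt (segmentCurve p q α β) ((β - α)⁻¹ • (q - p)) s := by
  have := ((((hasDerivAt_id s).sub_const α).div_const (β - α)).smul_const (q - p)).const_add p
  rw [one_div] at this
  exact this

theorem segmentCurve_left : segmentCurve p q α β α = p := by simp [segmentCurve]

theorem segmentCurve_right (h : α ≠ β) : segmentCurve p q α β β = q := by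
  simp [segmentCurve, div_self (sub_ne_zero.2 h.symm)]

theorem piecewiseC1On_segmentCurve (h : α ≤ β) : PiecewiseC1On (segmentCurve p q α β) α β :=
  ContDiffOn.piecewiseC1On (by unfold segmentCurve; fun_prop) h

theorem actionA_segmentCurve_le (hLa : Continuous (Function.uncurry La)) (h : α < β) {R C : ℝ}
    (hR : ‖q - p‖ ≤ R * (β - α)) (hC : ∀ x v, ‖v‖ ≤ R → La x v ≤ C) :
    actionA La (segmentCurve p q α β) α β ≤ C * (β - α) := by
  have hβα : 0 < β - α := sub_pos.2 h
  have hv : ‖(β - α)⁻¹ • (q - p)‖ ≤ R := by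
    rwa [norm_smul, norm_inv, Real.norm_of_nonneg hβα.le, inv_mul_le_iff₀ hβα, mul_comm]
  have := intervalIntegral.integral_mono_on h.le
    ((piecewiseC1On_segmentCurve h.le).intervalIntegrable_comp hLa) intervalIntegrable_const
    fun s _ => (hasDerivAt_segmentCurve s).deriv ▸ hC _ _ hv
  rwa [intervalIntegral.integral_const, smul_eq_mul, mul_comm] at this

end Action

def actionCosts (La : Ed d → Ed d → ℝ) (u : Ed d → ℝ) (σ : ℝ) (x : Ed d) : Set ℝ :=
  {r | ∃ γ : ℝ → Ed d, PiecewiseC1On γ 0 σ ∧ γ σ = x ∧ r = u (γ 0) + actionA La γ 0 σ}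

section LaxOleinik

variable {La : Ed d → Ed d → ℝ} {u : Ed d → ℝ} {γ : ℝ → Ed d} {σ : ℝ} {x : Ed d}

theorem actionCosts_nonempty (hσ : 0 ≤ σ) (x : Ed d) : (actionCosts La u σ x).Nonempty :=
  ⟨_, fun _ => x, contDiffOn_const.piecewiseC1On hσ, rfl, rfl⟩

/-- At `σ = 0` every admissible curve starts at `x` with zero action, so the infimum is `u x`
and the case split in `LOa` disappears. -/
theorem LOa_eq_sInf (hσ : 0 ≤ σ) (x : Ed d) : LOa La u σ x = sInf (actionCosts La u σ x) := by
  rcases hσ.eq_or_lt with rfl | hσ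
  · rw [LOa, if_pos rfl, ← csInf_singleton (u x)]
    congr 1
    refine (eq_singleton_iff_nonempty_unique_mem.2 ⟨actionCosts_nonempty le_rfl x, ?_⟩).symm
    rintro _ ⟨γ, -, rfl, rfl⟩
    simp [actionA]
  · exact if_neg hσ.ne'

theorem bddBelow_actionCosts (hLa : TonelliAut La) (hu : BddBelow (range u)) (σ : ℝ) (x : Ed d) :
    BddBelow (actionCosts La u σ x) := by
  obtain ⟨m, hm⟩ := hu
  obtain ⟨B, -, hB⟩ := hLa.exists_neg_le
  refine ⟨m - B * σ, ?_⟩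
  rintro _ ⟨γ, hγ, -, rfl⟩
  linarith [hγ.neg_mul_le_actionA hLa.continuous hB, hm ⟨γ 0, rfl⟩]

theorem LOa_le (hLa : TonelliAut La) (hu : BddBelow (range u)) (hγ : PiecewiseC1On γ 0 σ) :
    LOa La u σ (γ σ) ≤ u (γ 0) + actionA La γ 0 σ := by
  rw [LOa_eq_sInf hγ.le]
  exact csInf_le (bddBelow_actionCosts hLa hu _ _) ⟨γ, hγ, rfl, rfl⟩

theorem le_LOa (hσ : 0 ≤ σ) {c : ℝ}
    (h : ∀ γ, PiecewiseC1On γ 0 σ → γ σ = x → c ≤ u (γ 0) + actionA La γ 0 σ) :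
    c ≤ LOa La u σ x := by
  rw [LOa_eq_sInf hσ]
  exact le_csInf (actionCosts_nonempty hσ x) (by rintro _ ⟨γ, hγ, hx, rfl⟩; exact h γ hγ hx)

theorem exists_lt_LOa_add (hσ : 0 ≤ σ) (x : Ed d) {κ : ℝ} (hκ : 0 < κ) :
    ∃ γ, PiecewiseC1On γ 0 σ ∧ γ σ = x ∧ u (γ 0) + actionA La γ 0 σ < LOa La u σ x + κ := by
  rw [LOa_eq_sInf hσ]
  obtain ⟨_, ⟨γ, hγ, hx, rfl⟩, hlt⟩ := Real.lt_sInf_add_pos (actionCosts_nonempty hσ x) hκ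
  exact ⟨γ, hγ, hx, hlt⟩

theorem LOa_le_add_mul (hLa : TonelliAut La) (hu : BddBelow (range u)) (hσ : 0 ≤ σ) (x : Ed d) :
    LOa La u σ x ≤ u x + σ * La x 0 := by
  simpa [actionA_const] using LOa_le hLa hu (contDiffOn_const.piecewiseC1On hσ (γ := fun _ => x))

theorem sub_mul_le_LOa (hLa : TonelliAut La) {m B : ℝ} (hm : ∀ y, m ≤ u y)
    (hB : ∀ z v, -B ≤ La z v) (hσ : 0 ≤ σ) (x : Ed d) : m - B * σ ≤ LOa La u σ x :=
  le_LOa hσ fun γ hγ _ => by linarith [hγ.neg_mul_le_actionA hLa.continuous hB, hm (γ 0)]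

theorem LOa_add_le (hLa : TonelliAut La) (hu : BddBelow (range u)) (hσ : 0 ≤ σ) {τ : ℝ}
    (hτ : 0 < τ) {y : Ed d} {R C : ℝ} (hxy : ‖y - x‖ ≤ R * τ)
    (hC : ∀ z v, ‖v‖ ≤ R → La z v ≤ C) :
    LOa La u (σ + τ) y ≤ LOa La u σ x + C * τ := by
  rw [← sub_le_iff_le_add]
  refine le_LOa hσ fun γ hγ hγx => ?_
  have hστ : σ < σ + τ := by linarith
  have hseg := piecewiseC1On_segmentCurve (p := x) (q := y) hστ.le
  have hmatch : γ σ = segmentCurve x y σ (σ + τ) σ := hγx.trans segmentCurve_left.symm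
  have hΓ := LOa_le hLa hu (hγ.joinAt hseg hmatch)
  rw [eqOn_joinAt_left (show (0 : ℝ) ∈ Iic σ from hσ), eqOn_joinAt_right hmatch hστ.le,
    segmentCurve_right hστ.ne, actionA_joinAt hLa.continuous hγ hseg hmatch] at hΓ
  have hact := actionA_segmentCurve_le (p := x) (q := y) hLa.continuous hστ
    (by rwa [add_sub_cancel_left]) hC
  linarith

/-- The competitor runs along `γ` up to `s₁`, along a segment to `γ s₂` until `s₂ - δ`, and then
along `γ` delayed by `δ`. -/
theorem LOa_sub_le_of_shortcut (hLa : TonelliAut La) (hu : BddBelow (range u))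
    (hγ : PiecewiseC1On γ 0 σ) {s₁ s₂ δ R C : ℝ} (hδ : 0 ≤ δ) (hs₁ : 0 ≤ s₁) (hs : s₁ < s₂ - δ)
    (hs₂ : s₂ ≤ σ) (hR : ‖γ s₂ - γ s₁‖ ≤ R * (s₂ - δ - s₁)) (hC : ∀ z v, ‖v‖ ≤ R → La z v ≤ C) :
    LOa La u (σ - δ) (γ σ) ≤
      u (γ 0) + actionA La γ 0 s₁ + C * (s₂ - δ - s₁) + actionA La γ s₂ σ := by
  set seg := segmentCurve (γ s₁) (γ s₂) s₁ (s₂ - δ) with hseg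
  have hc := hLa.continuous
  have h₁ := hγ.mono le_rfl hs₁ (by linarith)
  have h₂ := piecewiseC1On_segmentCurve (p := γ s₁) (q := γ s₂) hs.le
  have h₃ := (hγ.mono (a' := s₂) (by linarith) hs₂ le_rfl).comp_add_const δ
  have hm₁ : γ s₁ = seg s₁ := segmentCurve_left.symm
  have hm₂ : joinAt γ seg s₁ (s₂ - δ) = γ (s₂ - δ + δ) := by
    rw [eqOn_joinAt_right hm₁ hs.le, hseg, segmentCurve_right hs.ne, sub_add_cancel]
  have hΓ := LOa_le hLa hu ((h₁.joinAt h₂ hm₁).joinAt h₃ hm₂)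
  rw [actionA_joinAt hc (h₁.joinAt h₂ hm₁) h₃ hm₂, actionA_joinAt hc h₁ h₂ hm₁,
    actionA_comp_add_const, eqOn_joinAt_right hm₂ (show σ - δ ∈ Ici (s₂ - δ) by simp [hs₂]),
    sub_add_cancel, eqOn_joinAt_left (show (0 : ℝ) ∈ Iic (s₂ - δ) by simp; linarith),
    eqOn_joinAt_left (show (0 : ℝ) ∈ Iic s₁ from hs₁)] at hΓ
  linarith [actionA_segmentCurve_le (p := γ s₁) (q := γ s₂) hc hs hR hC]

/-- On one of the `N` subintervals of length `σ / N` the curve moves at most `L / N`; there it is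
replaced by the shortcut, whose speed stays below `2 * L / σ`. -/
theorem LOa_sub_le_of_integral_norm_deriv_le (hLa : TonelliAut La) (hu : BddBelow (range u))
    (hγ : PiecewiseC1On γ 0 σ) (hσ : 0 < σ) {L C B : ℝ} (hL : ∫ s in 0..σ, ‖deriv γ s‖ ≤ L)
    (hC₀ : 0 ≤ C) (hC : ∀ z v, ‖v‖ ≤ 2 * L / σ → La z v ≤ C) (hB : ∀ z v, -B ≤ La z v)
    {N : ℕ} (hN : 0 < N) {δ : ℝ} (hδ₀ : 0 ≤ δ) (hδ : δ ≤ σ / (2 * N)) :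
    LOa La u (σ - δ) (γ σ) ≤ u (γ 0) + actionA La γ 0 σ + (C + B) * (σ / N) := by
  obtain ⟨j, hj, hjL⟩ := exists_integral_le_div hσ.le
    (hγ.intervalIntegrable_comp (φ := fun _ v => ‖v‖) continuous_snd.norm) hN
  simp only [zero_add, sub_zero] at hjL
  set s₁ := j * (σ / N)
  set s₂ := (j + 1) * (σ / N)
  have hN' : (0 : ℝ) < N := Nat.cast_pos.2 hN
  have hL₀ : 0 ≤ L := (intervalIntegral.integral_nonneg hσ.le fun _ _ => norm_nonneg _).trans hL
  have hs₁ : 0 ≤ s₁ := by positivity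
  have hs₂ : s₂ ≤ σ := by
    have : (j : ℝ) + 1 ≤ N := by exact_mod_cast hj
    calc s₂ ≤ N * (σ / N) := mul_le_mul_of_nonneg_right this (by positivity)
      _ = σ := by field_simp
  have hgap : σ / (2 * N) ≤ s₂ - δ - s₁ := by
    have : s₂ - s₁ = 2 * (σ / (2 * N)) := by simp only [s₁, s₂]; field_simp; ring
    linarith
  have hgap₀ : 0 < σ / (2 * N) := by positivity
  have hR : ‖γ s₂ - γ s₁‖ ≤ 2 * L / σ * (s₂ - δ - s₁) :=
    calc ‖γ s₂ - γ s₁‖ ≤ ∫ s in s₁..s₂, ‖deriv γ s‖ :=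
          (hγ.mono hs₁ (by linarith) hs₂).norm_sub_le_integral
      _ ≤ L / N := hjL.trans (div_le_div_of_nonneg_right hL hN'.le)
      _ = 2 * L / σ * (σ / (2 * N)) := by field_simp
      _ ≤ 2 * L / σ * (s₂ - δ - s₁) := by gcongr
  have hcut := LOa_sub_le_of_shortcut hLa hu hγ hδ₀ hs₁ (by linarith) hs₂ hR hC
  have hsplit₁ := (hγ.mono le_rfl hs₁ (by linarith)).actionA_add hLa.continuous
    (hγ.mono hs₁ (by linarith) hs₂)
  have hsplit₂ := (hγ.mono le_rfl (by linarith) hs₂).actionA_add hLa.continuous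
    (hγ.mono (by linarith) hs₂ le_rfl)
  have hmid := (hγ.mono hs₁ (by linarith) hs₂).neg_mul_le_actionA hLa.continuous hB
  have hs₂₁ : s₂ - s₁ = σ / N := by simp only [s₁, s₂]; ring
  have hCδ : C * (s₂ - δ - s₁) ≤ C * (σ / N) := by gcongr; linarith
  rw [hs₂₁] at hmid
  linarith

theorem exists_LOa_sub_le (hLa : TonelliAut La) (hub : BddBelow (range u))
    (hua : BddAbove (range u)) {a A ε : ℝ} (ha : 0 < a) (hε : 0 < ε) :
    ∃ η > 0, ∀ σ ∈ Icc a A, ∀ δ ∈ Icc 0 η, ∀ x, LOa La u (σ - δ) x ≤ LOa La u σ x + ε := by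
  obtain ⟨m, hm⟩ := hub
  obtain ⟨M, hM⟩ := hua
  obtain ⟨C₀, hC₀, hC₀'⟩ := hLa.exists_le_of_norm_le 0
  obtain ⟨B₁, hB₁, hB₁'⟩ := hLa.exists_mul_norm_sub_le zero_le_one
  obtain ⟨B, hB, hB'⟩ := hLa.exists_neg_le
  -- `K` bounds the length `∫ ‖γ'‖` of every curve within `1` of the infimum
  set K := M - m + A * C₀ + 1 + B₁ * A
  obtain ⟨C, hC, hC'⟩ := hLa.exists_le_of_norm_le (2 * K / a)
  set N := ⌈2 * (C + B) * A / ε⌉₊ + 1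
  have hN : (0 : ℝ) < N := by positivity
  have hNε : 2 * (C + B) * A / ε < N := by
    simp only [N, Nat.cast_add, Nat.cast_one]
    linarith [Nat.le_ceil (2 * (C + B) * A / ε)]
  refine ⟨a / (2 * N), by positivity, fun σ hσ δ hδ x => ?_⟩
  have hσ₀ : 0 < σ := ha.trans_le hσ.1
  obtain ⟨γ, hγ, rfl, hγ'⟩ := exists_lt_LOa_add (u := u) (La := La) hσ₀.le x
    (lt_min one_pos (half_pos hε))
  have hlen := hγ.mul_integral_norm_deriv_sub_le_actionA hLa.continuous hB₁'
  have hL : ∫ s in 0..σ, ‖deriv γ s‖ ≤ K := by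
    have := LOa_le_add_mul hLa ⟨m, hm⟩ hσ₀.le (γ σ)
    have : σ * La (γ σ) 0 ≤ A * C₀ := calc
      _ ≤ σ * C₀ := by gcongr; exact hC₀' _ _ (by simp)
      _ ≤ A * C₀ := by gcongr; exact hσ.2
    have : B₁ * σ ≤ B₁ * A := by gcongr; exact hσ.2
    linarith [min_le_left 1 (ε / 2), hm ⟨γ 0, rfl⟩, hM ⟨γ σ, rfl⟩]
  have hK : 0 ≤ K := (intervalIntegral.integral_nonneg hσ₀.le fun _ _ => norm_nonneg _).trans hL
  have hcut := LOa_sub_le_of_integral_norm_deriv_le hLa ⟨m, hm⟩ hγ hσ₀ hL hC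
    (fun z v hv => hC' z v (hv.trans (by gcongr; exact hσ.1))) hB' (Nat.cast_pos.1 hN) hδ.1
    (hδ.2.trans (by gcongr; exact hσ.1))
  have : (C + B) * (σ / N) ≤ ε / 2 := by
    rw [div_lt_iff₀ hε] at hNε
    rw [mul_div_assoc', div_le_iff₀ hN]
    nlinarith [hσ.2]
  linarith [min_le_right 1 (ε / 2)]

theorem exists_LOa_le_add (hLa : TonelliAut La) (hub : BddBelow (range u))
    (hua : BddAbove (range u)) {a A ε : ℝ} (ha : 0 < a) (hε : 0 < ε) :
    ∃ ζ > 0, ∀ σ ∈ Icc a A, ∀ σ' ∈ Icc a A, ∀ x y : Ed d, |σ' - σ| ≤ ζ → ‖y - x‖ ≤ ζ →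
      LOa La u σ' y ≤ LOa La u σ x + ε := by
  obtain ⟨C, hC, hC'⟩ := hLa.exists_le_of_norm_le 1
  obtain ⟨η, hη, hη'⟩ := exists_LOa_sub_le hLa hub hua (A := A) ha (half_pos hε)
  set ζ := min (min (η / 2) (a / 2)) (ε / (6 * (C + 1)))
  have hζ : 0 < ζ := by positivity
  have hζη : ζ ≤ η / 2 := (min_le_left _ _).trans (min_le_left _ _)
  have hζa : ζ ≤ a / 2 := (min_le_left _ _).trans (min_le_right _ _)
  have hζε : 6 * (C + 1) * ζ ≤ ε := by
    rw [← le_div_iff₀' (by positivity)]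
    exact min_le_right _ _
  refine ⟨ζ, hζ, fun σ hσ σ' hσ' x y hσσ' hxy => ?_⟩
  obtain ⟨h₁, h₂⟩ := abs_le.1 hσσ'
  have hshort := hη' σ hσ (2 * ζ) ⟨by positivity, by linarith⟩ x
  have hextend := LOa_add_le (u := u) hLa hub (σ := σ - 2 * ζ) (by linarith [hσ.1])
    (τ := σ' - σ + 2 * ζ) (by linarith) (hxy.trans (by linarith)) hC'
  rw [sub_add_add_cancel, add_sub_cancel] at hextend
  nlinarith

theorem continuousOn_LOa (hLa : TonelliAut La) (hub : BddBelow (range u))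
    (hua : BddAbove (range u)) :
    ContinuousOn (fun p : ℝ × Ed d => LOa La u p.1 p.2) (Ioi 0 ×ˢ univ) := by
  rintro ⟨t₀, x₀⟩ ⟨ht₀ : 0 < t₀, -⟩
  refine ContinuousAt.continuousWithinAt (Metric.tendsto_nhds.2 fun ε hε => ?_)
  obtain ⟨ζ, hζ, hζ'⟩ := exists_LOa_le_add hLa hub hua (half_pos ht₀) (A := 2 * t₀) (half_pos hε)
  have ht₀' : t₀ ∈ Icc (t₀ / 2) (2 * t₀) := ⟨by linarith, by linarith⟩
  have hnear : ∀ᶠ p : ℝ × Ed d in 𝓝 (t₀, x₀),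
      p.1 ∈ Icc (t₀ / 2) (2 * t₀) ∩ Metric.closedBall t₀ ζ ∧ p.2 ∈ Metric.closedBall x₀ ζ :=
    ((continuous_fst.tendsto _).eventually_mem (inter_mem (Icc_mem_nhds (by linarith)
      (by linarith)) (Metric.closedBall_mem_nhds _ hζ))).and
      ((continuous_snd.tendsto _).eventually_mem (Metric.closedBall_mem_nhds _ hζ))
  filter_upwards [hnear] with ⟨t, x⟩ ⟨⟨ht, htζ⟩, hxζ⟩
  rw [Metric.mem_closedBall, Real.dist_eq] at htζ
  rw [Metric.mem_closedBall, dist_eq_norm] at hxζ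
  have h₁ := hζ' t₀ ht₀' t ht x₀ x htζ hxζ
  have h₂ := hζ' t ht t₀ ht₀' x x₀ (by rwa [abs_sub_comm]) (by rwa [norm_sub_rev])
  rw [Real.dist_eq, abs_sub_lt_iff]
  constructor <;> linarith

theorem exists_le_LOa_of_continuousAt (hLa : TonelliAut La) (hub : BddBelow (range u))
    (hua : BddAbove (range u)) {x₀ : Ed d} (hu : ContinuousAt u x₀) {ε : ℝ} (hε : 0 < ε) :
    ∃ D, 0 ≤ D ∧ ∃ ρ > 0, ∀ x, dist x x₀ < ρ → ∀ σ, 0 ≤ σ → u x₀ - ε - D * σ ≤ LOa La u σ x := by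
  obtain ⟨m, hm⟩ := hub
  obtain ⟨M, hM⟩ := hua
  obtain ⟨ρ, hρ, hρ'⟩ := Metric.continuousAt_iff.1 hu ε hε
  have hmM : m ≤ M := (hm ⟨x₀, rfl⟩).trans (hM ⟨x₀, rfl⟩)
  obtain ⟨D, hD₀, hD⟩ := hLa.exists_mul_norm_sub_le (A := 2 * (M - m) / ρ)
    (div_nonneg (by linarith) hρ.le)
  refine ⟨D, hD₀, ρ / 2, half_pos hρ, fun x hx σ hσ => le_LOa hσ fun γ hγ hγx => ?_⟩
  have hact : 2 * (M - m) / ρ * ‖x - γ 0‖ - D * σ ≤ actionA La γ 0 σ := by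
    have := hγ.mul_integral_norm_deriv_sub_le_actionA hLa.continuous hD
    have := mul_le_mul_of_nonneg_left (hγx ▸ hγ.norm_sub_le_integral)
      (div_nonneg (by linarith : 0 ≤ 2 * (M - m)) hρ.le)
    linarith
  by_cases hnear : dist (γ 0) x₀ < ρ
  · have := hρ' hnear
    rw [Real.dist_eq, abs_lt] at this
    have : 0 ≤ 2 * (M - m) / ρ * ‖x - γ 0‖ := by positivity
    linarith
  · -- the distance `ρ / 2` travelled by the curve already costs more than `M - m`
    have hfar : ρ / 2 ≤ ‖x - γ 0‖ := by
      rw [← dist_eq_norm]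
      linarith [dist_triangle (γ 0) x x₀, dist_comm x (γ 0)]
    have : M - m ≤ 2 * (M - m) / ρ * ‖x - γ 0‖ := calc
      M - m = 2 * (M - m) / ρ * (ρ / 2) := by field_simp
      _ ≤ _ := by gcongr
    linarith [hm ⟨γ 0, rfl⟩, hM ⟨x₀, rfl⟩]

theorem LOnew_eq_sInf_image (t : ℝ) (x : Ed d) :
    LOnew La u t x = sInf ((fun σ => LOa La u σ x) '' Icc t (2 * t)) := by
  rw [LOnew]
  congr 1
  ext r
  simp [eq_comm, and_assoc]

theorem continuousOn_LOnew (hLa : TonelliAut La) (hub : BddBelow (range u))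
    (hua : BddAbove (range u)) :
    ContinuousOn (fun p : ℝ × Ed d => LOnew La u p.1 p.2) (Ioi 0 ×ˢ univ) := by
  simpa only [LOnew_eq_sInf_image] using (continuousOn_LOa hLa hub hua).sInf_image_Icc_two_mul

theorem continuousWithinAt_LOnew_zero (hLa : TonelliAut La) (hub : BddBelow (range u))
    (hua : BddAbove (range u)) {x₀ : Ed d} (hu : ContinuousAt u x₀) :
    ContinuousWithinAt (fun p : ℝ × Ed d => LOnew La u p.1 p.2) {p | 0 ≤ p.1} (0, x₀) := by
  have h₀ : LOnew La u 0 x₀ = u x₀ := by simp [LOnew_eq_sInf_image, LOa]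
  rw [ContinuousWithinAt, h₀]
  refine tendsto_order.2 ⟨fun c hc => ?_, fun c hc => ?_⟩
  · obtain ⟨D, hD, ρ, hρ, hρ'⟩ := exists_le_LOa_of_continuousAt hLa hub hua hu
      (half_pos (sub_pos.2 hc))
    have hlim : Tendsto (fun p : ℝ × Ed d => u x₀ - (u x₀ - c) / 2 - D * (2 * p.1))
        (𝓝[{p | 0 ≤ p.1}] (0, x₀)) (𝓝 (u x₀ - (u x₀ - c) / 2)) := by
      have : Continuous fun p : ℝ × Ed d => u x₀ - (u x₀ - c) / 2 - D * (2 * p.1) := by fun_prop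
      simpa using (this.tendsto (0, x₀)).mono_left nhdsWithin_le_nhds
    filter_upwards [self_mem_nhdsWithin,
      hlim.eventually (lt_mem_nhds (show c < u x₀ - (u x₀ - c) / 2 by linarith)),
      ((continuous_snd.tendsto (0, x₀)).mono_left nhdsWithin_le_nhds).eventually
        (Metric.ball_mem_nhds x₀ hρ)] with ⟨t, x⟩ (ht : 0 ≤ t) hlow hx
    rw [LOnew_eq_sInf_image]
    refine hlow.trans_le (le_csInf ⟨_, mem_image_of_mem _ ⟨le_rfl, by linarith⟩⟩ ?_)
    rintro _ ⟨σ, hσ, rfl⟩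
    have : D * σ ≤ D * (2 * t) := by gcongr; exact hσ.2
    linarith [hρ' x hx σ (ht.trans hσ.1)]
  · obtain ⟨m, hm⟩ := hub
    obtain ⟨B, hB₀, hB⟩ := hLa.exists_neg_le
    have hlim : Tendsto (fun p : ℝ × Ed d => u p.2 + p.1 * La p.2 0) (𝓝 (0, x₀)) (𝓝 (u x₀)) := by
      have : ContinuousAt (fun p : ℝ × Ed d => u p.2 + p.1 * La p.2 0) (0, x₀) :=
        (hu.comp continuousAt_snd).add (continuousAt_fst.mul
          (hLa.continuous.comp (continuous_snd.prodMk continuous_const)).continuousAt)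
      simpa using this.tendsto
    filter_upwards [self_mem_nhdsWithin, (hlim.mono_left nhdsWithin_le_nhds).eventually
      (gt_mem_nhds hc)] with ⟨t, x⟩ (ht : 0 ≤ t) hup
    have hbdd : BddBelow ((fun σ => LOa La u σ x) '' Icc t (2 * t)) := by
      refine ⟨m - B * (2 * t), ?_⟩
      rintro _ ⟨σ, hσ, rfl⟩
      have : B * σ ≤ B * (2 * t) := by gcongr; exact hσ.2
      linarith [sub_mul_le_LOa hLa (fun y => hm ⟨y, rfl⟩) hB (ht.trans hσ.1) x]
    rw [LOnew_eq_sInf_image]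
    exact (csInf_le hbdd (mem_image_of_mem _ ⟨le_rfl, by linarith⟩)).trans_lt
      ((LOa_le_add_mul hLa ⟨m, hm⟩ ht x).trans_lt hup)

end LaxOleinik

end

theorem LOnew_continuousOn_general
    {d : ℕ} (La : Ed d → Ed d → ℝ) (hLa : TonelliAut La)
    (u : Ed d → ℝ) (hu : Continuous u) (huper : IsZdPeriodic u) :
    ContinuousOn (fun p : ℝ × Ed d => LOnew La u p.1 p.2) {p : ℝ × Ed d | 0 ≤ p.1} := by
  have hK := huper.isCompact_range hu
  rintro ⟨t, x⟩ (ht : 0 ≤ t)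
  rcases ht.eq_or_lt with rfl | ht
  · exact continuousWithinAt_LOnew_zero hLa hK.bddBelow hK.bddAbove hu.continuousAt
  · exact ((continuousOn_LOnew hLa hK.bddBelow hK.bddAbove).continuousAt
      ((isOpen_Ioi.prod isOpen_univ).mem_nhds (mk_mem_prod (mem_Ioi.2 ht) (mem_univ x)))
      ).continuousWithinAt

/-- `(t,x) ↦ T̃ᵃ_t u (x)` is continuous on `[0,∞) × ℝ^d`. -/
theorem LOnew_continuousOn
    {d : ℕ} (hd : 1 ≤ d) (La : Ed d → Ed d → ℝ) (hLa : TonelliAut La)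
    (u : Ed d → ℝ) (hu : Continuous u) (huper : IsZdPeriodic u) :
    ContinuousOn (fun p : ℝ × Ed d => LOnew La u p.1 p.2) {p : ℝ × Ed d | 0 ≤ p.1} :=
  LOnew_continuousOn_general La hLa u hu huper
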